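/- Let γ ∈ [−2,1], ā_{ij}(v) = (a_{ij}*μ)(v) with a_{ij}(z) = |z|^{γ+2}(δ_{ij} − z_i z_j/|z|²) and μ the standard Gaussian on ℝ³, and ℓ₁(v), ℓ₂(v) the eigenvalues of ā(v) on span{v} and v^⊥. Then there exists c₀ > 0 such that for all v, ξ ∈ ℝ³: ā_{ij}(v) ξ_i ξ_j = ℓ₁(v)|P_v ξ|² + ℓ₂(v)|(I−P_v)ξ|² ≥ c₀ ( ⟨v⟩^γ |P_v ξ|² + ⟨v⟩^{γ+2} |(I−P_v)ξ|² ), where P_v is the orthogonal projection onto v. -/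

import Mathlib

open MeasureTheory Real

noncomputable section

abbrev R3 := EuclideanSpace ℝ (Fin 3)

/-- The standard Maxwellian (Gaussian) on ℝ³. -/
def mu (w : R3) : ℝ := (2 * π) ^ (-(3:ℝ)/2) * Real.exp (-‖w‖ ^ 2 / 2)

/-- The Japanese bracket ⟨v⟩ = (1 + |v|²)^{1/2}. -/
def jb (v : R3) : ℝ := Real.sqrt (1 + ‖v‖ ^ 2)

/-- The Landau collision matrix a_{ij}(v) = |v|^{γ+2} (δ_{ij} - v_i v_j / |v|²). -/
def aMat (γ : ℝ) (v : R3) (i j : Fin 3) : ℝ :=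
  ‖v‖ ^ (γ + 2) * ((if i = j then (1:ℝ) else 0) - v i * v j / ‖v‖ ^ 2)

/-- ā_{ij} = a_{ij} * μ. -/
def abar (γ : ℝ) (v : R3) (i j : Fin 3) : ℝ := ∫ w : R3, aMat γ (v - w) i j * mu w

open Classical in
/-- Orthogonal projection onto the direction of `v` (zero if `v = 0`). -/
def projv (v ξ : R3) : R3 := if v = 0 then 0 else ((∑ j, ξ j * v j) / ‖v‖ ^ 2) • v

open scoped RealInnerProductSpace

/-!
`ā(v)ξ·ξ` is the `μ`-average of `a(z)ξ·ξ = |z|^γ (|z|²|ξ|² - (z·ξ)²) ≥ 0` with `z = v - w`, so it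
is at least the `μ`-mass of any ball times the infimum of the integrand on that ball. Take
orthonormal `e, f ⊥ v` and the ball `B(f/2, 1/8)`: on it `|z|` is within a factor `8` of `⟨v⟩`,
`|z·f| > 3/8` and `|z·e| < 1/8`. For `ξ = v`, the component of `z` along `f ⊥ v` gives
`|z|²|v|² - (z·v)² ≥ (z·f)²|v|²`, whence `ℓ₁(v) ≳ ⟨v⟩^γ`; for `ξ = e`, `(z·e)² ≤ |z|²/9`, whence
`ℓ₂(v) ≳ ⟨v⟩^{γ+2}`. The identity is the spectral decomposition of `ā(v)` along
`span{v} ⊕ v^⊥`.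
-/

theorem EuclideanSpace.sum_mul_eq_inner {ι : Type*} [Fintype ι] (x y : EuclideanSpace ℝ ι) :
    ∑ i, x i * y i = ⟪x, y⟫ := by
  simp [PiLp.inner_apply, mul_comm]

theorem inner_apply_self_eq_of_eigen {E : Type*} [NormedAddCommGroup E]
    [InnerProductSpace ℝ E] (T : E →ₗ[ℝ] E) {v : E} {ℓ₁ ℓ₂ : ℝ} (h₁ : T v = ℓ₁ • v)
    (h₂ : ∀ ξ, ⟪ξ, v⟫ = 0 → T ξ = ℓ₂ • ξ) (ξ : E) :
    ⟪T ξ, ξ⟫ = ℓ₁ * ‖(ℝ ∙ v).starProjection ξ‖ ^ 2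
      + ℓ₂ * ‖ξ - (ℝ ∙ v).starProjection ξ‖ ^ 2 := by
  have hqv : ⟪ξ - (ℝ ∙ v).starProjection ξ, v⟫ = 0 :=
    Submodule.mem_orthogonal_singleton_iff_inner_left.1
      ((ℝ ∙ v).sub_starProjection_mem_orthogonal ξ)
  obtain ⟨c, hc⟩ := Submodule.mem_span_singleton.1 ((ℝ ∙ v).starProjection_apply_mem ξ)
  rw [← hc] at hqv ⊢
  set q := ξ - c • v
  have hξ : ξ = c • v + q := by simp [q]
  have hvq : ⟪v, q⟫ = 0 := by rw [real_inner_comm, hqv]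
  rw [hξ, map_add, map_smul, h₁, h₂ q hqv]
  simp only [inner_add_left, inner_add_right, real_inner_smul_left, real_inner_smul_right, hvq,
    hqv, real_inner_self_eq_norm_sq, norm_smul, Real.norm_eq_abs, mul_pow, sq_abs]
  ring

theorem Matrix.toLpLin_apply_apply {ι : Type*} [Fintype ι] [DecidableEq ι] (A : Matrix ι ι ℝ)
    (x : EuclideanSpace ℝ ι) (i : ι) : Matrix.toLpLin 2 2 A x i = ∑ j, A i j * x j := by
  simp [Matrix.toLpLin_apply, Matrix.mulVec, dotProduct]

theorem sum_mul_mul_eq_starProjection_of_eigen {ι : Type*} [Fintype ι] [DecidableEq ι]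
    (A : Matrix ι ι ℝ) {v : EuclideanSpace ℝ ι} {ℓ₁ ℓ₂ : ℝ}
    (h₁ : ∀ i, ∑ j, A i j * v j = ℓ₁ * v i)
    (h₂ : ∀ ξ : EuclideanSpace ℝ ι, ∑ j, ξ j * v j = 0 → ∀ i, ∑ j, A i j * ξ j = ℓ₂ * ξ i)
    (ξ : EuclideanSpace ℝ ι) :
    ∑ i, ∑ j, A i j * ξ i * ξ j = ℓ₁ * ‖(ℝ ∙ v).starProjection ξ‖ ^ 2
      + ℓ₂ * ‖ξ - (ℝ ∙ v).starProjection ξ‖ ^ 2 := by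
  have hT := Matrix.toLpLin_apply_apply A
  rw [← inner_apply_self_eq_of_eigen (Matrix.toLpLin 2 2 A) (v := v) (ℓ₁ := ℓ₁) (ℓ₂ := ℓ₂)
    (by ext i; simp [hT, h₁])
    (fun η hη => by ext i; simp [hT, h₂ η (by rwa [EuclideanSpace.sum_mul_eq_inner])]),
    ← EuclideanSpace.sum_mul_eq_inner]
  simp only [hT, Finset.sum_mul]
  exact Finset.sum_congr rfl fun i _ => Finset.sum_congr rfl fun j _ => by ring

theorem sum_mul_mul_eq_of_eigen {ι : Type*} [Fintype ι] (A : ι → ι → ℝ)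
    {ξ : EuclideanSpace ℝ ι} {ℓ : ℝ} (h : ∀ i, ∑ j, A i j * ξ j = ℓ * ξ i) :
    ∑ i, ∑ j, A i j * ξ i * ξ j = ℓ * ‖ξ‖ ^ 2 := by
  calc ∑ i, ∑ j, A i j * ξ i * ξ j = ∑ i, (∑ j, A i j * ξ j) * ξ i := by
        simp only [Finset.sum_mul]
        exact Finset.sum_congr rfl fun i _ => Finset.sum_congr rfl fun j _ => by ring
    _ = ℓ * ∑ i, ξ i * ξ i := by simp only [h, Finset.mul_sum, mul_assoc]
    _ = ℓ * ‖ξ‖ ^ 2 := by rw [EuclideanSpace.sum_mul_eq_inner, real_inner_self_eq_norm_sq]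

theorem projv_eq_starProjection (v ξ : R3) : projv v ξ = (ℝ ∙ v).starProjection ξ := by
  rw [Submodule.starProjection_singleton, projv, EuclideanSpace.sum_mul_eq_inner, real_inner_comm]
  split_ifs with hv <;> simp [hv]

theorem real_inner_sq_le_norm_sq_mul_norm_sq {E : Type*} [NormedAddCommGroup E]
    [InnerProductSpace ℝ E] (x y : E) : ⟪x, y⟫ ^ 2 ≤ ‖x‖ ^ 2 * ‖y‖ ^ 2 := by
  rw [← mul_pow, ← sq_abs]
  exact pow_le_pow_left₀ (abs_nonneg _) (abs_real_inner_le_norm x y) 2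

theorem inner_sq_add_inner_sq_mul_le {E : Type*} [NormedAddCommGroup E]
    [InnerProductSpace ℝ E] {f ξ : E} (hf : ‖f‖ = 1) (hfξ : ⟪f, ξ⟫ = 0) (z : E) :
    ⟪z, ξ⟫ ^ 2 + ⟪z, f⟫ ^ 2 * ‖ξ‖ ^ 2 ≤ ‖z‖ ^ 2 * ‖ξ‖ ^ 2 := by
  have hy : ⟪z - ⟪z, f⟫ • f, ξ⟫ = ⟪z, ξ⟫ := by
    rw [inner_sub_left, real_inner_smul_left, hfξ, mul_zero, sub_zero]
  have hny : ‖z - ⟪z, f⟫ • f‖ ^ 2 = ‖z‖ ^ 2 - ⟪z, f⟫ ^ 2 := by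
    rw [norm_sub_sq_real, norm_smul, real_inner_smul_right, hf, Real.norm_eq_abs, mul_one, sq_abs]
    ring
  have := real_inner_sq_le_norm_sq_mul_norm_sq (z - ⟪z, f⟫ • f) ξ
  rw [hy, hny] at this
  linarith

theorem exists_orthonormal_pair_orthogonal {E : Type*} [NormedAddCommGroup E]
    [InnerProductSpace ℝ E] [FiniteDimensional ℝ E] (hE : 3 ≤ Module.finrank ℝ E) (v : E) :
    ∃ e f : E, ‖e‖ = 1 ∧ ‖f‖ = 1 ∧ ⟪e, v⟫ = 0 ∧ ⟪f, v⟫ = 0 ∧ ⟪f, e⟫ = 0 := by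
  have hrank : 2 ≤ Module.finrank ℝ (ℝ ∙ v)ᗮ := by
    have := Submodule.finrank_add_finrank_orthogonal (ℝ ∙ v)
    have := finrank_span_le_card (R := ℝ) ({v} : Set E)
    simp only [Set.toFinset_singleton, Finset.card_singleton] at this
    omega
  let b := stdOrthonormalBasis ℝ (ℝ ∙ v)ᗮ
  let e := b ⟨0, by omega⟩
  let f := b ⟨1, by omega⟩
  refine ⟨e, f, b.orthonormal.1 _, b.orthonormal.1 _,
    Submodule.mem_orthogonal_singleton_iff_inner_left.1 e.2,
    Submodule.mem_orthogonal_singleton_iff_inner_left.1 f.2, b.orthonormal.2 (by simp)⟩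

section HalfBall

variable {E : Type*} [NormedAddCommGroup E] [InnerProductSpace ℝ E] {f w : E}

theorem abs_inner_sub_half_lt (hw : w ∈ Metric.ball ((1/2 : ℝ) • f) (1/8)) {x : E}
    (hx : ‖x‖ = 1) : |⟪w, x⟫ - ⟪f, x⟫ / 2| < 1/8 := by
  have h : ⟪w, x⟫ - ⟪f, x⟫ / 2 = ⟪w - (1/2 : ℝ) • f, x⟫ := by
    rw [inner_sub_left, real_inner_smul_left]; ring
  rw [h]
  calc _ ≤ ‖w - (1/2 : ℝ) • f‖ * ‖x‖ := abs_real_inner_le_norm _ _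
    _ < 1/8 := by rw [hx, mul_one]; exact mem_ball_iff_norm.1 hw

theorem norm_lt_of_mem_ball_half (hf : ‖f‖ = 1) (hw : w ∈ Metric.ball ((1/2 : ℝ) • f) (1/8)) :
    ‖w‖ < 5/8 := by
  have h := norm_sub_norm_le w ((1/2 : ℝ) • f)
  rw [norm_smul, hf] at h
  norm_num at h
  linarith [mem_ball_iff_norm.1 hw]

theorem inner_sub_sq_gt_of_mem_ball_half (hf : ‖f‖ = 1)
    (hw : w ∈ Metric.ball ((1/2 : ℝ) • f) (1/8)) {v : E} (hfv : ⟪f, v⟫ = 0) :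
    9/64 < ⟪v - w, f⟫ ^ 2 := by
  have h := abs_lt.1 (abs_inner_sub_half_lt hw hf)
  rw [real_inner_self_eq_norm_sq, hf] at h
  rw [inner_sub_left, real_inner_comm, hfv]
  nlinarith [h.1]

theorem norm_sub_gt_of_mem_ball_half (hf : ‖f‖ = 1)
    (hw : w ∈ Metric.ball ((1/2 : ℝ) • f) (1/8)) {v : E} (hfv : ⟪f, v⟫ = 0) :
    3/8 < ‖v - w‖ := by
  have h := (inner_sub_sq_gt_of_mem_ball_half hf hw hfv).trans_le
    (real_inner_sq_le_norm_sq_mul_norm_sq (v - w) f)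
  rw [hf] at h
  nlinarith [norm_nonneg (v - w)]

theorem inner_sub_sq_lt_of_mem_ball_half (hw : w ∈ Metric.ball ((1/2 : ℝ) • f) (1/8))
    {v e : E} (he : ‖e‖ = 1) (hev : ⟪e, v⟫ = 0)
    (hfe : ⟪f, e⟫ = 0) : ⟪v - w, e⟫ ^ 2 < 1/64 := by
  have h := abs_lt.1 (abs_inner_sub_half_lt hw he)
  rw [hfe] at h
  rw [inner_sub_left, real_inner_comm, hev]
  nlinarith [h.1, h.2]

end HalfBall

def aQuad (γ : ℝ) (z ξ : R3) : ℝ := ∑ i, ∑ j, aMat γ z i j * ξ i * ξ j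

theorem aQuad_eq (γ : ℝ) (z ξ : R3) :
    aQuad γ z ξ = ‖z‖ ^ (γ + 2) * (‖ξ‖ ^ 2 - ⟪z, ξ⟫ ^ 2 / ‖z‖ ^ 2) := by
  rw [← real_inner_self_eq_norm_sq ξ, ← EuclideanSpace.sum_mul_eq_inner,
    ← EuclideanSpace.sum_mul_eq_inner]
  simp only [aQuad, aMat, Fin.sum_univ_three]
  norm_num [Fin.ext_iff]
  ring

theorem aQuad_eq_of_ne_zero (γ : ℝ) {z : R3} (hz : z ≠ 0) (ξ : R3) :
    aQuad γ z ξ = ‖z‖ ^ γ * (‖z‖ ^ 2 * ‖ξ‖ ^ 2 - ⟪z, ξ⟫ ^ 2) := by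
  have hz' : 0 < ‖z‖ := norm_pos_iff.2 hz
  rw [aQuad_eq, Real.rpow_add hz', Real.rpow_two]
  field_simp

theorem aQuad_nonneg (γ : ℝ) (z ξ : R3) : 0 ≤ aQuad γ z ξ := by
  rcases eq_or_ne z 0 with rfl | hz
  · rw [aQuad_eq, inner_zero_left, zero_pow two_ne_zero, zero_div, sub_zero]
    positivity
  · rw [aQuad_eq_of_ne_zero γ hz]
    exact mul_nonneg (Real.rpow_nonneg (norm_nonneg z) γ)
      (sub_nonneg.2 (real_inner_sq_le_norm_sq_mul_norm_sq z ξ))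

theorem abs_aMat_le (γ : ℝ) (z : R3) (i j : Fin 3) : |aMat γ z i j| ≤ 2 * ‖z‖ ^ (γ + 2) := by
  have hz : 0 ≤ ‖z‖ ^ (γ + 2) := Real.rpow_nonneg (norm_nonneg z) _
  have hδ : |(if i = j then (1:ℝ) else 0)| ≤ 1 := by split_ifs <;> norm_num
  have hzz : |z i * z j / ‖z‖ ^ 2| ≤ 1 := by
    rw [abs_div, abs_of_nonneg (sq_nonneg ‖z‖), abs_mul, sq]
    exact div_le_one_of_le₀ (mul_le_mul (PiLp.norm_apply_le z i) (PiLp.norm_apply_le z j)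
      (abs_nonneg _) (norm_nonneg _)) (by positivity)
  rw [aMat, abs_mul, abs_of_nonneg hz, mul_comm]
  exact mul_le_mul_of_nonneg_right ((abs_sub _ _).trans (by linarith)) hz

theorem Real.rpow_le_exp_mul {x t : ℝ} (hx : 0 ≤ x) (ht : 0 ≤ t) : x ^ t ≤ rexp (t * x) := by
  calc x ^ t ≤ rexp x ^ t := Real.rpow_le_rpow hx ((Real.add_one_le_exp x).trans' (by linarith)) ht
    _ = rexp (t * x) := by rw [← Real.exp_mul, mul_comm]

theorem integrable_exp_neg_mul_norm_sq {V : Type*} [NormedAddCommGroup V] [InnerProductSpace ℝ V]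
    [FiniteDimensional ℝ V] [MeasurableSpace V] [BorelSpace V] {b : ℝ} (hb : 0 < b) :
    Integrable (fun w : V => rexp (-b * ‖w‖ ^ 2)) := by
  have h := (GaussianFourier.integrable_cexp_neg_mul_sq_norm_add (V := V) (b := (b : ℂ))
    (by simpa using hb) 0 0).norm
  refine h.congr (Filter.Eventually.of_forall fun w => ?_)
  simp [Complex.norm_exp, ← Complex.ofReal_pow]

theorem mu_pos (w : R3) : 0 < mu w := by unfold mu; positivity

theorem integrable_aMat_mul_mu {γ : ℝ} (hγ : -2 ≤ γ) (v : R3) (i j : Fin 3) :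
    Integrable (fun w : R3 => aMat γ (v - w) i j * mu w) := by
  set t := γ + 2
  have ht : 0 ≤ t := by linarith
  refine ((integrable_exp_neg_mul_norm_sq (V := R3) (b := 1/4) (by norm_num)).const_mul
    (2 * (2 * π) ^ (-(3:ℝ)/2) * rexp (t * ‖v‖ + t ^ 2))).mono'
    (by unfold aMat mu; fun_prop) (Filter.Eventually.of_forall fun w => ?_)
  have hexp : ‖v - w‖ ^ t ≤ rexp (t * ‖v‖ + t * ‖w‖) :=
    (Real.rpow_le_exp_mul (norm_nonneg _) ht).trans <| Real.exp_le_exp.2 <| by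
      rw [← mul_add]; exact mul_le_mul_of_nonneg_left (norm_sub_le v w) ht
  have hgauss : rexp (t * ‖v‖ + t * ‖w‖) * rexp (-‖w‖ ^ 2 / 2)
      ≤ rexp (t * ‖v‖ + t ^ 2) * rexp (-(1/4) * ‖w‖ ^ 2) := by
    rw [← Real.exp_add, ← Real.exp_add]
    exact Real.exp_le_exp.2 (by nlinarith [sq_nonneg (‖w‖ - 2 * t)])
  rw [Real.norm_eq_abs, abs_mul, abs_of_nonneg (mu_pos w).le]
  calc |aMat γ (v - w) i j| * mu w ≤ 2 * rexp (t * ‖v‖ + t * ‖w‖) * mu w :=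
        mul_le_mul_of_nonneg_right (by linarith [abs_aMat_le γ (v - w) i j]) (mu_pos w).le
    _ = 2 * (2 * π) ^ (-(3:ℝ)/2) * (rexp (t * ‖v‖ + t * ‖w‖) * rexp (-‖w‖ ^ 2 / 2)) := by
        unfold mu; ring
    _ ≤ 2 * (2 * π) ^ (-(3:ℝ)/2) * (rexp (t * ‖v‖ + t ^ 2) * rexp (-(1/4) * ‖w‖ ^ 2)) :=
        mul_le_mul_of_nonneg_left hgauss (by positivity)
    _ = _ := by ring

theorem aQuad_mul_eq_sum (γ : ℝ) (z ξ : R3) (c : ℝ) :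
    aQuad γ z ξ * c = ∑ i, ∑ j, aMat γ z i j * c * (ξ i * ξ j) := by
  simp only [aQuad, Finset.sum_mul]
  exact Finset.sum_congr rfl fun i _ => Finset.sum_congr rfl fun j _ => by ring

theorem integrable_aQuad_mul_mu {γ : ℝ} (hγ : -2 ≤ γ) (v ξ : R3) :
    Integrable (fun w => aQuad γ (v - w) ξ * mu w) := by
  simp_rw [aQuad_mul_eq_sum]
  exact integrable_finsetSum _ fun i _ => integrable_finsetSum _ fun j _ =>
    (integrable_aMat_mul_mu hγ v i j).mul_const _

theorem sum_abar_mul_mul_eq_integral {γ : ℝ} (hγ : -2 ≤ γ) (v ξ : R3) :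
    ∑ i, ∑ j, abar γ v i j * ξ i * ξ j = ∫ w, aQuad γ (v - w) ξ * mu w := by
  have hint : ∀ i j, Integrable (fun w => aMat γ (v - w) i j * mu w * (ξ i * ξ j)) :=
    fun i j => (integrable_aMat_mul_mu hγ v i j).mul_const _
  simp_rw [aQuad_mul_eq_sum]
  rw [integral_finsetSum _ fun i _ => integrable_finsetSum _ fun j _ => hint i j]
  refine Finset.sum_congr rfl fun i _ => ?_
  rw [integral_finsetSum _ fun j _ => hint i j]
  refine Finset.sum_congr rfl fun j _ => ?_
  rw [integral_mul_const, abar, mul_assoc]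

theorem mul_measureReal_le_integral {X : Type*} [MeasurableSpace X] {μ : Measure X} {f : X → ℝ}
    {s : Set X} {c : ℝ} (hf : Integrable f μ) (hf0 : 0 ≤ f) (hs : MeasurableSet s)
    (hμs : μ s ≠ ⊤) (hc : ∀ x ∈ s, c ≤ f x) : c * μ.real s ≤ ∫ x, f x ∂μ :=
  (setIntegral_ge_of_const_le_real hs hμs hc hf.integrableOn).trans
    (setIntegral_le_integral hf (Filter.Eventually.of_forall hf0))

theorem mu_ge_of_norm_le_one {w : R3} (hw : ‖w‖ ≤ 1) :
    (2 * π) ^ (-(3:ℝ)/2) * rexp (-1/2) ≤ mu w := by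
  unfold mu
  gcongr
  nlinarith [norm_nonneg w]

theorem exists_pos_mul_le_sum_abar {γ : ℝ} (hγ : -2 ≤ γ) :
    ∃ κ > 0, ∀ (v ξ f : R3) (c : ℝ), ‖f‖ = 1 →
      (∀ w ∈ Metric.ball ((1/2 : ℝ) • f) (1/8), c ≤ aQuad γ (v - w) ξ) →
      c * κ ≤ ∑ i, ∑ j, abar γ v i j * ξ i * ξ j := by
  refine ⟨(2 * π) ^ (-(3:ℝ)/2) * rexp (-1/2) * volume.real (Metric.ball (0 : R3) (1/8)),
    mul_pos (by positivity) (ENNReal.toReal_pos (Metric.measure_ball_pos volume 0 (by norm_num)).ne'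
      measure_ball_lt_top.ne), fun v ξ f c hf hball => ?_⟩
  rw [sum_abar_mul_mul_eq_integral hγ, ← mul_assoc,
    ← Measure.addHaar_real_ball_center volume ((1/2 : ℝ) • f)]
  refine mul_measureReal_le_integral (integrable_aQuad_mul_mu hγ v ξ)
    (fun w => mul_nonneg (aQuad_nonneg γ _ ξ) (mu_pos w).le) measurableSet_ball
    measure_ball_lt_top.ne fun w hw => ?_
  exact mul_le_mul (hball w hw)
    (mu_ge_of_norm_le_one (by linarith [norm_lt_of_mem_ball_half hf hw]))
    (by positivity) (aQuad_nonneg γ _ ξ)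

theorem jb_pos (v : R3) : 0 < jb v := Real.sqrt_pos.2 (by positivity)

theorem jb_le_and_le_of_norm_sub_ge {v w : R3} (hvw : 3/8 ≤ ‖v - w‖) (hw : ‖w‖ ≤ 5/8) :
    jb v ≤ 8 * ‖v - w‖ ∧ ‖v - w‖ ≤ 8 * jb v := by
  have h₁ : jb v ≤ 1 + ‖v‖ := sqrt_one_add_norm_sq_le v
  have h₂ : ‖v‖ ≤ jb v := Real.le_sqrt_of_sq_le (by linarith)
  have h₃ : ‖v‖ ≤ ‖v - w‖ + ‖w‖ := norm_le_norm_sub_add v w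
  have h₄ : ‖v - w‖ ≤ ‖v‖ + ‖w‖ := norm_sub_le v w
  have h₅ : 1 ≤ jb v := Real.one_le_sqrt.2 (by nlinarith [norm_nonneg v])
  constructor <;> linarith

theorem Real.rpow_le_rpow_mul_of_le_mul {a b K S s : ℝ} (ha : 0 < a) (hK : 1 ≤ K)
    (hba : b ≤ K * a) (hab : a ≤ K * b) (hs : |s| ≤ S) : b ^ s ≤ K ^ S * a ^ s := by
  have hK0 : 0 < K := by linarith
  have hb : 0 < b := pos_of_mul_pos_right (ha.trans_le hab) hK0.le
  rcases le_or_gt 0 s with hs0 | hs0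
  · calc b ^ s ≤ (K * a) ^ s := Real.rpow_le_rpow hb.le hba hs0
      _ = K ^ s * a ^ s := Real.mul_rpow hK0.le ha.le
      _ ≤ K ^ S * a ^ s := by
        gcongr
        exact (le_abs_self s).trans hs
  · calc b ^ s ≤ (a / K) ^ s :=
          Real.rpow_le_rpow_of_nonpos (div_pos ha hK0) (div_le_of_le_mul₀ hK0.le hb.le
            (by linarith)) hs0.le
      _ = K ^ (-s) * a ^ s := by rw [Real.div_rpow ha.le hK0.le, Real.rpow_neg hK0.le]; ring
      _ ≤ K ^ S * a ^ s := by
        gcongr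
        exact (neg_le_abs s).trans hs

theorem jb_rpow_le_of_mem_ball_half {s : ℝ} (hs : |s| ≤ 3) {v f w : R3} (hf : ‖f‖ = 1)
    (hfv : ⟪f, v⟫ = 0) (hw : w ∈ Metric.ball ((1/2 : ℝ) • f) (1/8)) :
    jb v ^ s ≤ 512 * ‖v - w‖ ^ s := by
  have hz := norm_sub_gt_of_mem_ball_half hf hw hfv
  obtain ⟨h₁, h₂⟩ := jb_le_and_le_of_norm_sub_ge hz.le (norm_lt_of_mem_ball_half hf hw).le
  have h := Real.rpow_le_rpow_mul_of_le_mul (by linarith) (by norm_num) h₁ h₂ hs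
  rwa [show (8:ℝ) ^ (3:ℝ) = 512 by norm_num] at h

theorem le_aQuad_self_of_mem_ball_half {γ : ℝ} (hγ : |γ| ≤ 3) {v f w : R3} (hf : ‖f‖ = 1)
    (hfv : ⟪f, v⟫ = 0) (hw : w ∈ Metric.ball ((1/2 : ℝ) • f) (1/8)) :
    9/64 / 512 * jb v ^ γ * ‖v‖ ^ 2 ≤ aQuad γ (v - w) v := by
  have hz : v - w ≠ 0 := norm_pos_iff.1 (by linarith [norm_sub_gt_of_mem_ball_half hf hw hfv])
  have hzf := inner_sub_sq_gt_of_mem_ball_half hf hw hfv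
  have hpow := jb_rpow_le_of_mem_ball_half hγ hf hfv hw
  have hbessel := inner_sq_add_inner_sq_mul_le hf hfv (v - w)
  rw [aQuad_eq_of_ne_zero γ hz]
  calc 9/64 / 512 * jb v ^ γ * ‖v‖ ^ 2 ≤ ‖v - w‖ ^ γ * (⟪v - w, f⟫ ^ 2 * ‖v‖ ^ 2) := by
        have := mul_le_mul hzf.le hpow (Real.rpow_nonneg (jb_pos v).le γ) (sq_nonneg _)
        nlinarith [sq_nonneg ‖v‖]
    _ ≤ _ := by gcongr; linarith

theorem le_aQuad_of_mem_ball_half {γ : ℝ} (hγ : |γ + 2| ≤ 3) {v e f w : R3} (he : ‖e‖ = 1)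
    (hf : ‖f‖ = 1) (hev : ⟪e, v⟫ = 0) (hfv : ⟪f, v⟫ = 0) (hfe : ⟪f, e⟫ = 0)
    (hw : w ∈ Metric.ball ((1/2 : ℝ) • f) (1/8)) :
    8/9 / 512 * jb v ^ (γ + 2) ≤ aQuad γ (v - w) e := by
  have hz := norm_sub_gt_of_mem_ball_half hf hw hfv
  have hze := inner_sub_sq_lt_of_mem_ball_half hw he hev hfe
  have hpow := jb_rpow_le_of_mem_ball_half hγ hf hfv hw
  have hratio : ⟪v - w, e⟫ ^ 2 / ‖v - w‖ ^ 2 ≤ 1/9 := by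
    rw [div_le_iff₀ (by positivity)]
    nlinarith
  rw [aQuad_eq, he]
  calc 8/9 / 512 * jb v ^ (γ + 2) ≤ ‖v - w‖ ^ (γ + 2) * (8/9) := by linarith
    _ ≤ _ := by gcongr; linarith

theorem exists_pos_eigenvalue_lower_bounds {γ : ℝ} (hγ : γ ∈ Set.Icc (-2 : ℝ) 1)
    {ℓ₁ ℓ₂ : R3 → ℝ} (h₁ : ∀ (v : R3) (i : Fin 3), ∑ j, abar γ v i j * v j = ℓ₁ v * v i)
    (h₂ : ∀ (v ξ : R3), (∑ j, ξ j * v j) = 0 → ∀ i, ∑ j, abar γ v i j * ξ j = ℓ₂ v * ξ i) :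
    ∃ c > 0, ∀ v, (v ≠ 0 → c * jb v ^ γ ≤ ℓ₁ v) ∧ c * jb v ^ (γ + 2) ≤ ℓ₂ v := by
  obtain ⟨κ, hκ, hball⟩ := exists_pos_mul_le_sum_abar hγ.1
  have hγ₁ : |γ| ≤ 3 := abs_le.2 ⟨by linarith [hγ.1], by linarith [hγ.2]⟩
  have hγ₂ : |γ + 2| ≤ 3 := abs_le.2 ⟨by linarith [hγ.1], by linarith [hγ.2]⟩
  refine ⟨9/64 / 512 * κ, by positivity, fun v => ⟨fun hv => ?_, ?_⟩⟩ <;>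
    obtain ⟨e, f, he, hf, hev, hfv, hfe⟩ := exists_orthonormal_pair_orthogonal (by simp) v
  · have h := hball v v f _ hf fun w hw => le_aQuad_self_of_mem_ball_half hγ₁ hf hfv hw
    rw [sum_mul_mul_eq_of_eigen _ (h₁ v)] at h
    have hv2 : 0 < ‖v‖ ^ 2 := by positivity
    nlinarith
  · have h := hball v e f _ hf fun w hw => le_aQuad_of_mem_ball_half hγ₂ he hf hev hfv hfe hw
    have hev' : ∑ j, e j * v j = 0 := by rw [EuclideanSpace.sum_mul_eq_inner, hev]
    rw [sum_mul_mul_eq_of_eigen _ (h₂ v e hev'), he] at h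
    nlinarith [mul_nonneg (Real.rpow_nonneg (jb_pos v).le (γ + 2)) hκ.le]

theorem stmt17_general (γ : ℝ) (hγ : γ ∈ Set.Icc (-2:ℝ) 1) (ℓ₁ ℓ₂ : R3 → ℝ)
    (h1 : ∀ (v : R3) (i : Fin 3), ∑ j, abar γ v i j * v j = ℓ₁ v * v i)
    (h2 : ∀ (v ξ : R3), (∑ j, ξ j * v j) = 0 →
            ∀ i, ∑ j, abar γ v i j * ξ j = ℓ₂ v * ξ i) :
    ∃ c₀ : ℝ, 0 < c₀ ∧ ∀ (v ξ : R3),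
      (∑ i, ∑ j, abar γ v i j * ξ i * ξ j
          = ℓ₁ v * ‖projv v ξ‖ ^ 2 + ℓ₂ v * ‖ξ - projv v ξ‖ ^ 2) ∧
      c₀ * (jb v ^ γ * ‖projv v ξ‖ ^ 2 + jb v ^ (γ + 2) * ‖ξ - projv v ξ‖ ^ 2)
        ≤ ∑ i, ∑ j, abar γ v i j * ξ i * ξ j := by
  obtain ⟨c, hc, hℓ⟩ := exists_pos_eigenvalue_lower_bounds hγ h1 h2
  have hquad : ∀ v ξ, ∑ i, ∑ j, abar γ v i j * ξ i * ξ j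
      = ℓ₁ v * ‖projv v ξ‖ ^ 2 + ℓ₂ v * ‖ξ - projv v ξ‖ ^ 2 := fun v ξ => by
    rw [projv_eq_starProjection]
    exact sum_mul_mul_eq_starProjection_of_eigen (Matrix.of (abar γ v)) (h1 v) (h2 v) ξ
  refine ⟨c, hc, fun v ξ => ⟨hquad v ξ, ?_⟩⟩
  have hpar : c * jb v ^ γ * ‖projv v ξ‖ ^ 2 ≤ ℓ₁ v * ‖projv v ξ‖ ^ 2 := by
    rcases eq_or_ne v 0 with rfl | hv
    · simp [projv]
    · exact mul_le_mul_of_nonneg_right ((hℓ v).1 hv) (sq_nonneg _)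
  have hperp := mul_le_mul_of_nonneg_right (hℓ v).2 (sq_nonneg ‖ξ - projv v ξ‖)
  rw [hquad]
  linarith

theorem stmt17 (γ : ℝ) (hγ : γ ∈ Set.Icc (-2:ℝ) 1) (ℓ₁ ℓ₂ : R3 → ℝ)
    (hpos1 : ∀ v, 0 < ℓ₁ v) (hpos2 : ∀ v, 0 < ℓ₂ v)
    (h1 : ∀ (v : R3) (i : Fin 3), ∑ j, abar γ v i j * v j = ℓ₁ v * v i)
    (h2 : ∀ (v ξ : R3), (∑ j, ξ j * v j) = 0 →
            ∀ i, ∑ j, abar γ v i j * ξ j = ℓ₂ v * ξ i) :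
    ∃ c₀ : ℝ, 0 < c₀ ∧ ∀ (v ξ : R3),
      (∑ i, ∑ j, abar γ v i j * ξ i * ξ j
          = ℓ₁ v * ‖projv v ξ‖ ^ 2 + ℓ₂ v * ‖ξ - projv v ξ‖ ^ 2) ∧
      c₀ * (jb v ^ γ * ‖projv v ξ‖ ^ 2 + jb v ^ (γ + 2) * ‖ξ - projv v ξ‖ ^ 2)
        ≤ ∑ i, ∑ j, abar γ v i j * ξ i * ξ j :=
  stmt17_general γ hγ ℓ₁ ℓ₂ h1 h2
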